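/- Let A_1 = [[0,1,0],[1,0,−1],[0,−1,0]] and for k ≥ 1 let A_{k+1} = A_1 ⊗ I_{3^k} + diag(1,−1,1) ⊗ A_k. Then for every k ≥ 1 the characteristic polynomial satisfies det(xI − A_{k+1}) = det(xI − A_k) · det((x² − 2)I − A_k²). -/

import Mathlib

open Kronecker Matrix

/-- A matrix `M` has real eigenvalue `μ` if `M x = μ x` for some nonzero vector `x`. -/
def HasEig {I : Type*} [Fintype I] (M : Matrix I I ℝ) (μ : ℝ) : Prop :=
  ∃ x : I → ℝ, x ≠ 0 ∧ M.mulVec x = μ • x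

/-- `A_1 = [[0,1,0],[1,0,−1],[0,−1,0]]`, a signed adjacency matrix of `P_3`. -/
def matA1 : Matrix (Fin 3) (Fin 3) ℝ := !![0, 1, 0; 1, 0, -1; 0, -1, 0]

/-- `D = diag(1,−1,1)`. -/
def matD3 : Matrix (Fin 3) (Fin 3) ℝ := !![1, 0, 0; 0, -1, 0; 0, 0, 1]

/-- The signed adjacency matrices of `P_3^k`: `AP3 0 = A_1` and
`AP3 (k+1) = A_1 ⊗ I_{3^k} + D ⊗ AP3 k` (Kronecker products), so `AP3 k` is the
matrix `A_{k+1}` of the paper; it is indexed by `Fin (k+1) → Fin 3`, a type of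
cardinality `3^(k+1)`. -/
noncomputable def AP3 : (k : ℕ) → Matrix (Fin (k + 1) → Fin 3) (Fin (k + 1) → Fin 3) ℝ
  | 0 => Matrix.reindex (Equiv.funUnique (Fin 1) (Fin 3)).symm
      (Equiv.funUnique (Fin 1) (Fin 3)).symm matA1
  | (k + 1) =>
      Matrix.reindex (Fin.consEquiv fun _ : Fin (k + 2) => Fin 3)
        (Fin.consEquiv fun _ : Fin (k + 2) => Fin 3)
        (matA1 ⊗ₖ (1 : Matrix (Fin (k + 1) → Fin 3) (Fin (k + 1) → Fin 3) ℝ)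
          + matD3 ⊗ₖ AP3 k)

/-!
The blocks of `x • 1 - A_{k+1}`, viewed as a `3 × 3` matrix of `3^k × 3^k` blocks, are
polynomials in `A_k`, so they commute. By Silvester's theorem (`Matrix.det_det`) its determinant
is therefore the determinant of the `3 × 3` determinant taken over `ℝ[A_k]`, and that `3 × 3`
determinant is `(x - A_k) * ((x² - 2) - A_k²)`.
-/

open Polynomial

theorem det_smul_one_sub_reindex {R m n : Type*} [CommRing R] [Fintype m] [DecidableEq m]
    [Fintype n] [DecidableEq n] (e : m ≃ n) (M : Matrix m m R) (x : R) :
    (x • 1 - reindex e e M).det = (x • 1 - M).det := by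
  rw [← det_reindex_self e (x • 1 - M)]
  simp [reindex_apply, submatrix_sub, submatrix_smul, submatrix_one_equiv]

section LinearPencil

variable {R m n : Type*} [CommRing R] [DecidableEq m] [Fintype n] [DecidableEq n]

noncomputable def linearPencil (A D : Matrix m m R) : Matrix m m R[X] :=
  A.map C + (X : R[X]) • D.map C

theorem comp_map_aeval_C_smul_one_sub_linearPencil (A D : Matrix m m R) (B : Matrix n n R)
    (x : R) :
    comp m m n n R ((C x • 1 - linearPencil A D).map (aeval B))
      = x • 1 - (A ⊗ₖ 1 + D ⊗ₖ B) := by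
  ext ⟨i, a⟩ ⟨j, b⟩
  by_cases hij : i = j <;> by_cases hab : a = b <;>
    simp [linearPencil, one_apply, hij, hab, Algebra.algebraMap_eq_smul_one]

theorem det_smul_one_sub_kronecker_add_kronecker [Fintype m] (A D : Matrix m m R)
    (B : Matrix n n R) (x : R) :
    (x • 1 - (A ⊗ₖ 1 + D ⊗ₖ B)).det = (aeval B (C x • 1 - linearPencil A D).det).det := by
  rw [← comp_map_aeval_C_smul_one_sub_linearPencil]
  exact (det_det (C x • 1 - linearPencil A D) (aeval B).toRingHom).symm

end LinearPencil

theorem det_C_smul_one_sub_linearPencil_matA1_matD3 (x : ℝ) :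
    (C x • 1 - linearPencil matA1 matD3).det = (C x - X) * (C (x ^ 2 - 2) - X ^ 2) := by
  rw [det_fin_three]
  simp [linearPencil, matA1, matD3, map_sub, map_pow, map_ofNat]
  ring

theorem AP3_charpoly_rec (k : ℕ) (x : ℝ) :
    (x • (1 : Matrix (Fin (k + 2) → Fin 3) (Fin (k + 2) → Fin 3) ℝ) - AP3 (k + 1)).det
      = (x • (1 : Matrix (Fin (k + 1) → Fin 3) (Fin (k + 1) → Fin 3) ℝ) - AP3 k).det
        * (((x ^ 2 - 2) • (1 : Matrix (Fin (k + 1) → Fin 3) (Fin (k + 1) → Fin 3) ℝ)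
            - (AP3 k) ^ 2).det) := by
  rw [AP3, det_smul_one_sub_reindex, det_smul_one_sub_kronecker_add_kronecker,
    det_C_smul_one_sub_linearPencil_matA1_matD3]
  simp only [map_mul, map_sub (aeval (R := ℝ) (AP3 k)), aeval_C, aeval_X, map_pow,
    Algebra.algebraMap_eq_smul_one, det_mul]
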